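/- Let h = (x + y·f)/z with x, y, z ∈ A, y, z ≠ 0, and f a quadratic unit. For ε with |z|·ε < 1, one has the inclusions of F_q-vector spaces z·Λ_{|y|^{−1}ε}(f) ⊆ Λ_ε(h) ⊆ y^{−1}·Λ_{|z|ε}(f), where Λ_δ(g) = { λ ∈ A : ‖λg‖ < δ }. -/

import Mathlib

open Polynomial

/-- `‖x‖`: distance from `x ∈ K` to the nearest element of `A = F_q[T]`. -/
noncomputable def pnorm {Fq K : Type*} [Field Fq] [Field K]
    (ι : Polynomial Fq →+* K) (v : AbsoluteValue K ℝ) (x : K) : ℝ :=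
  sInf (Set.range fun p : Polynomial Fq => v (x - ι p))

/-- `Λ_δ(g) = { λ ∈ A : ‖λg‖ < δ }`. -/
def Lambda {Fq K : Type*} [Field Fq] [Field K]
    (ι : Polynomial Fq →+* K) (v : AbsoluteValue K ℝ) (g : K) (δ : ℝ) :
    Set (Polynomial Fq) :=
  {p | pnorm ι v (ι p * g) < δ}

/-! Both inclusions come from the identity `z h = x + y f` in the form `(zλ) h = y (λ f) + λ x`
(resp. `(yλ) f = z (λ h) - λ x`): the distance to `A` ignores the polynomial summand and grows at
most by the factor `|y|` (resp. `|z|`) under multiplication by `y` (resp. `z`). -/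

section Pnorm

variable {Fq K : Type*} [Field Fq] [Field K] (ι : Polynomial Fq →+* K) (v : AbsoluteValue K ℝ)

lemma pnorm_le (u : K) (p : Polynomial Fq) : pnorm ι v u ≤ v (u - ι p) :=
  csInf_le ⟨0, by rintro r ⟨q, rfl⟩; exact v.nonneg _⟩ ⟨p, rfl⟩

lemma pnorm_add_apply (u : K) (p : Polynomial Fq) : pnorm ι v (u + ι p) = pnorm ι v u := by
  have hshift : (fun q => v (u + ι p - ι q)) = (fun q => v (u - ι q)) ∘ Equiv.subRight p := by
    ext q
    simp only [Function.comp_apply, Equiv.subRight_apply, map_sub]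
    ring_nf
  rw [pnorm, pnorm, hshift, (Equiv.subRight p).surjective.range_comp _]

lemma pnorm_apply_mul_le (g : Polynomial Fq) (u : K) :
    pnorm ι v (ι g * u) ≤ v (ι g) * pnorm ι v u := by
  change (⨅ p, v (ι g * u - ι p)) ≤ v (ι g) * ⨅ p, v (u - ι p)
  rw [Real.mul_iInf_of_nonneg (v.nonneg _)]
  refine le_ciInf fun p => ?_
  rw [← v.map_mul, mul_sub, ← map_mul]
  exact pnorm_le ι v _ _

lemma mem_Lambda_of_mul_eq {g g' : K} {m c lam p : Polynomial Fq} {δ : ℝ}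
    (hc : 0 < v (ι c)) (hrel : ι m * g = ι c * (ι lam * g') + ι p)
    (hlam : lam ∈ Lambda ι v g' δ) : m ∈ Lambda ι v g (v (ι c) * δ) :=
  calc pnorm ι v (ι m * g) = pnorm ι v (ι c * (ι lam * g')) := by rw [hrel, pnorm_add_apply]
    _ ≤ v (ι c) * pnorm ι v (ι lam * g') := pnorm_apply_mul_le ι v c _
    _ < v (ι c) * δ := mul_lt_mul_of_pos_left hlam hc

end Pnorm

theorem stmt_9_general {Fq K : Type*} [Field Fq] [Fintype Fq] [Field K]
    (ι : Polynomial Fq →+* K) (v : AbsoluteValue K ℝ)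
    (hdeg : ∀ g : Polynomial Fq, g ≠ 0 → v (ι g) = (Fintype.card Fq : ℝ) ^ g.natDegree)
    (f : K)
    (x y z : Polynomial Fq) (hy : y ≠ 0) (hz : z ≠ 0)
    (h : K) (hh : ι z * h = ι x + ι y * f)
    (ε : ℝ) :
    (∀ lam ∈ Lambda ι v f (((Fintype.card Fq : ℝ) ^ y.natDegree)⁻¹ * ε),
        z * lam ∈ Lambda ι v h ε) ∧
    (∀ lam ∈ Lambda ι v h ε,
        y * lam ∈ Lambda ι v f ((Fintype.card Fq : ℝ) ^ z.natDegree * ε)) := by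
  have hpos : ∀ g : Polynomial Fq, g ≠ 0 → 0 < v (ι g) := fun g hg => by
    rw [hdeg g hg]; positivity
  refine ⟨fun lam hlam => ?_, fun lam hlam => ?_⟩
  · have hrel : ι (z * lam) * h = ι y * (ι lam * f) + ι (lam * x) := by
      simp only [map_mul]
      linear_combination (ι lam) * hh
    have hmem := mem_Lambda_of_mul_eq ι v (hpos y hy) hrel hlam
    rwa [hdeg y hy, mul_inv_cancel_left₀ (by positivity)] at hmem
  · have hrel : ι (y * lam) * f = ι z * (ι lam * h) + ι (-(lam * x)) := by
      simp only [map_mul, map_neg]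
      linear_combination (-ι lam) * hh
    simpa only [hdeg z hz] using mem_Lambda_of_mul_eq ι v (hpos z hz) hrel hlam

/-- With `h = (x + y f)/z`, `x, y, z ∈ A`, `y, z ≠ 0`, `f` a quadratic unit,
and `|z| ε < 1`, one has `z Λ_{|y|⁻¹ε}(f) ⊆ Λ_ε(h) ⊆ y⁻¹ Λ_{|z|ε}(f)` (the latter stated as
`y Λ_ε(h) ⊆ Λ_{|z|ε}(f)`). -/
theorem stmt_9 {Fq K : Type*} [Field Fq] [Fintype Fq] [Field K]
    (ι : Polynomial Fq →+* K) (v : AbsoluteValue K ℝ)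
    (hna : ∀ x' y' : K, v (x' + y') ≤ max (v x') (v y'))
    (hdeg : ∀ g : Polynomial Fq, g ≠ 0 → v (ι g) = (Fintype.card Fq : ℝ) ^ g.natDegree)
    (a : Polynomial Fq) (hd : 0 < a.natDegree) (b : Fq) (hb : b ≠ 0)
    (f : K) (hroot : f ^ 2 = ι a * f + ι (C b))
    (x y z : Polynomial Fq) (hy : y ≠ 0) (hz : z ≠ 0)
    (h : K) (hh : ι z * h = ι x + ι y * f)
    (ε : ℝ) (hε : (Fintype.card Fq : ℝ) ^ z.natDegree * ε < 1) :
    (∀ lam ∈ Lambda ι v f (((Fintype.card Fq : ℝ) ^ y.natDegree)⁻¹ * ε),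
        z * lam ∈ Lambda ι v h ε) ∧
    (∀ lam ∈ Lambda ι v h ε,
        y * lam ∈ Lambda ι v f ((Fintype.card Fq : ℝ) ^ z.natDegree * ε)) :=
  stmt_9_general ι v hdeg f x y z hy hz h hh ε
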